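/- If n h(x, y) = h(x, Ty) for all x, y ∈ D₀ (as holds on the invariant distribution of a pointwise k-slant submanifold of a Kähler manifold with ∇T = 0), then n(n h(x, y)) = -h(x, y) for all x, y ∈ D₀; in particular, either h vanishes on D₀ × D₀, or -1 is an eigenvalue of n² and every nonzero h(x, y) with x, y ∈ D₀ is an eigenvector for it (Theorem 3.5 (iii), fiberwise form). -/

import Mathlib

open scoped RealInnerProductSpace

/-! On the invariant part `D₀` the normal component `N` of `J` vanishes, since `J D₀ ⊆ D₀ ⊆ W`;
hence `T = J` on `D₀` and `T² = -id` there. Applying `n h(x, y) = h(x, T y)` twice gives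
`n² h(x, y) = h(x, T² y) = -h(x, y)`. -/

section

variable {V : Type*} [NormedAddCommGroup V] [InnerProductSpace ℝ V]

theorem Submodule.eq_of_eq_add_of_mem_orthogonal {K : Submodule ℝ V} {a b c : V}
    (ha : a ∈ K) (hb : b ∈ K) (hc : c ∈ Kᗮ) (habc : a = b + c) : b = a := by
  have hcK : c ∈ K := by
    rw [eq_sub_of_add_eq' habc.symm]
    exact K.sub_mem ha hb
  have hc0 : c = 0 := K.orthogonal_disjoint.le_bot ⟨hcK, hc⟩
  rw [habc, hc0, add_zero]

theorem tangential_eq_of_map_mem {J T N : V →ₗ[ℝ] V} {W : Submodule ℝ V}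
    (hT : ∀ x ∈ W, T x ∈ W) (hN : ∀ x ∈ W, N x ∈ Wᗮ) (hTN : ∀ x ∈ W, J x = T x + N x)
    {x : V} (hx : x ∈ W) (hJx : J x ∈ W) : T x = J x :=
  Submodule.eq_of_eq_add_of_mem_orthogonal hJx (hT x hx) (hN x hx) (hTN x hx)

end

theorem n_sq_eq_neg_one_on_invariant_general
    {V : Type*} [NormedAddCommGroup V] [InnerProductSpace ℝ V]
    (J : V →ₗ[ℝ] V)
    (hJsq : ∀ x : V, J (J x) = -x)
    (W : Submodule ℝ V)
    (T N : V →ₗ[ℝ] V)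
    (hT : ∀ x ∈ W, T x ∈ W)
    (hN : ∀ x ∈ W, N x ∈ Wᗮ)
    (hTN : ∀ x ∈ W, J x = T x + N x)
    (k : ℕ)
    (D : Fin (k+1) → Submodule ℝ V)
    (hDW : ∀ i, D i ≤ W)
    (hinv : ∀ x ∈ D 0, J x ∈ D 0)
    (n : V →ₗ[ℝ] V)
    (h : V →ₗ[ℝ] V →ₗ[ℝ] V)
    (hnab : ∀ x ∈ D 0, ∀ y ∈ D 0, n (h x y) = h x (T y)) :
    ∀ x ∈ D 0, ∀ y ∈ D 0, n (n (h x y)) = -(h x y) := by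
  have hTJ : ∀ z ∈ D 0, T z = J z := fun z hz =>
    tangential_eq_of_map_mem hT hN hTN (hDW 0 hz) (hDW 0 (hinv z hz))
  intro x hx y hy
  have hTy : T y ∈ D 0 := hTJ y hy ▸ hinv y hy
  calc n (n (h x y)) = n (h x (T y)) := by rw [hnab x hx y hy]
    _ = h x (T (T y)) := hnab x hx (T y) hTy
    _ = h x (-y) := by rw [hTJ (T y) hTy, hTJ y hy, hJsq]
    _ = -(h x y) := map_neg (h x) y

/-- Theorem 3.5 (iii), fiberwise: if `n h(x, y) = h(x, Ty)` for all `x, y ∈ D₀`, then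
`n²(h(x, y)) = -h(x, y)` for all `x, y ∈ D₀`; in particular, either `h` vanishes on
`D₀ × D₀`, or `-1` is an eigenvalue of `n²` and every nonzero `h(x, y)` with
`x, y ∈ D₀` is an eigenvector for it. -/
theorem n_sq_eq_neg_one_on_invariant
    {V : Type*} [NormedAddCommGroup V] [InnerProductSpace ℝ V] [FiniteDimensional ℝ V]
    (J : V →ₗ[ℝ] V)
    (hJinner : ∀ x y : V, ⟪J x, J y⟫ = ⟪x, y⟫)
    (hJsq : ∀ x : V, J (J x) = -x)
    (W : Submodule ℝ V)
    (T N : V →ₗ[ℝ] V)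
    (hT : ∀ x ∈ W, T x ∈ W)
    (hN : ∀ x ∈ W, N x ∈ Wᗮ)
    (hTN : ∀ x ∈ W, J x = T x + N x)
    (k : ℕ)
    (D : Fin (k+1) → Submodule ℝ V)
    (hDW : ∀ i, D i ≤ W)
    (hDorth : ∀ i j, i ≠ j → ∀ x ∈ D i, ∀ y ∈ D j, ⟪x, y⟫ = 0)
    (hinv : ∀ x ∈ D 0, J x ∈ D 0)
    (hTD : ∀ i : Fin (k+1), i ≠ 0 → ∀ x ∈ D i, T x ∈ D i)
    (θ : Fin (k+1) → ℝ)
    (hθ0 : θ 0 = 0)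
    (hθ : ∀ i : Fin (k+1), i ≠ 0 → θ i ∈ Set.Ioc 0 (Real.pi / 2))
    (hslant : ∀ i : Fin (k+1), i ≠ 0 → ∀ x ∈ D i, ‖T x‖ = Real.cos (θ i) * ‖x‖)
    (P : Fin (k+1) → V →ₗ[ℝ] V)
    (hPmem : ∀ i x, P i x ∈ D i)
    (hPorth : ∀ i x, ∀ y ∈ D i, ⟪x - P i x, y⟫ = 0)
    (hPsum : ∀ x ∈ W, x = ∑ i, P i x)
    (t n : V →ₗ[ℝ] V)
    (ht : ∀ v ∈ Wᗮ, t v ∈ W)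
    (hn : ∀ v ∈ Wᗮ, n v ∈ Wᗮ)
    (htn : ∀ v ∈ Wᗮ, J v = t v + n v)
    (h : V →ₗ[ℝ] V →ₗ[ℝ] V)
    (hhmem : ∀ x ∈ W, ∀ y ∈ W, h x y ∈ Wᗮ)
    (hhsymm : ∀ x ∈ W, ∀ y ∈ W, h x y = h y x)
    (hnab : ∀ x ∈ D 0, ∀ y ∈ D 0, n (h x y) = h x (T y)) :
    ∀ x ∈ D 0, ∀ y ∈ D 0, n (n (h x y)) = -(h x y) :=
  n_sq_eq_neg_one_on_invariant_general J hJsq W T N hT hN hTN k D hDW hinv n h hnab
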